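/- arXiv:1806.10791 — 2 statements merged into one kernel-verified Lean document; each statement's English description precedes it below -/
import Mathlib

section
/- The set W̃ is a subgroup of N_W(W_Σ), and the normaliser N_W(W_Σ) is the (internal) semidirect product of W̃ and W_Σ: W̃ ∩ W_Σ = {e}, W̃ normalises W_Σ, and the multiplication map W̃ × W_Σ → N_W(W_Σ), (w, u) ↦ w u, is a bijection; in particular W̃ maps isomorphically onto the quotient group N_W(W_Σ) / W_Σ. -/
/-!
Relative Coxeter groups: common definitions.

`(W, S)` is a Coxeter system (Mathlib's `CoxeterSystem M W`), `ℓ = cs.length`.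
For `w : W`, `invSet cs w` is the set `T(w)` of left inversions of `w`, and
`descSet cs w = T(w) ∩ S` is `D(w)`.  For a subset `Sg ⊆ S` (playing the role of `Σ`),
`par Sg` is the standard parabolic subgroup `W_Σ`, `parRefl Sg` its set of
reflections `T_Σ`, `minRight cs Sg = W^Σ`, `minLeft cs Sg = ^ΣW`,
`relN cs Sg Sg' = N(Σ, Σ')`, `IsLongest cs Sg w` says `w` is a longest element of `W_Σ`,
`longest cs Sg` is the longest element `w₀^Σ`, `relW cs Sg = W̃`,
`complSet cs Sg = Σ^∁`, `tilde cs Sg s = s̃ = w₀^{Σ∪{s}} w₀^Σ`, `relS cs Sg = S̃`,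
`relLength cs Sg = ℓ̃ : W → ℕ∞`, and `GoodSubset cs Sg` records the standing
hypotheses (1) and (2) on `Σ`.
-/

namespace RelativeCoxeter

variable {B W : Type*} [Group W] {M : CoxeterMatrix B}

/-- The set `S` of simple reflections of the Coxeter system. -/
def simpleSet (cs : CoxeterSystem M W) : Set W := Set.range cs.simple

/-- `T(w)`: the set of left inversions of `w`, i.e. reflections `t` with `ℓ(tw) < ℓ(w)`. -/
def invSet (cs : CoxeterSystem M W) (w : W) : Set W :=
  {t | cs.IsReflection t ∧ cs.length (t * w) < cs.length w}

/-- `D(w) = T(w) ∩ S`. -/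
def descSet (cs : CoxeterSystem M W) (w : W) : Set W :=
  invSet cs w ∩ simpleSet cs

/-- The standard parabolic subgroup `W_Σ` generated by `Σ`. -/
def par (Sg : Set W) : Subgroup W := Subgroup.closure Sg

/-- `T_Σ`: the set of reflections of the Coxeter system `(W_Σ, Σ)`. -/
def parRefl (Sg : Set W) : Set W :=
  {t | ∃ u ∈ par Sg, ∃ s ∈ Sg, t = u * s * u⁻¹}

/-- `W^Σ = {w : T(w⁻¹) ∩ T_Σ = ∅}`, minimal-length representatives of `W/W_Σ`. -/
def minRight (cs : CoxeterSystem M W) (Sg : Set W) : Set W :=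
  {w | invSet cs w⁻¹ ∩ parRefl Sg = ∅}

/-- `^ΣW = {w : T(w) ∩ T_Σ = ∅}`, minimal-length representatives of `W_Σ\W`. -/
def minLeft (cs : CoxeterSystem M W) (Sg : Set W) : Set W :=
  {w | invSet cs w ∩ parRefl Sg = ∅}

/-- `N(Σ, Σ') = {y ∈ W^Σ ∩ ^{Σ'}W : y W_Σ y⁻¹ = W_{Σ'}}`. -/
def relN (cs : CoxeterSystem M W) (Sg Sg' : Set W) : Set W :=
  {y | y ∈ minRight cs Sg ∧ y ∈ minLeft cs Sg' ∧
    (fun u => y * u * y⁻¹) '' (par Sg : Set W) = (par Sg' : Set W)}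

/-- `w` is a longest element of `W_Σ`. -/
def IsLongest (cs : CoxeterSystem M W) (Sg : Set W) (w : W) : Prop :=
  w ∈ par Sg ∧ ∀ u ∈ par Sg, cs.length u ≤ cs.length w

/-- The longest element `w₀^Σ` of `W_Σ` (defined when it exists; junk value `1` otherwise). -/
noncomputable def longest (cs : CoxeterSystem M W) (Sg : Set W) : W :=
  letI := Classical.propDecidable (∃ w, IsLongest cs Sg w)
  if h : ∃ w, IsLongest cs Sg w then h.choose else 1

/-- `W̃ = {w : w W_Σ w⁻¹ = W_Σ and T(w) ∩ T_Σ = ∅}`. -/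
def relW (cs : CoxeterSystem M W) (Sg : Set W) : Set W :=
  {w | (fun u => w * u * w⁻¹) '' (par Sg : Set W) = (par Sg : Set W) ∧
    invSet cs w ∩ parRefl Sg = ∅}

/-- `Σ^∁ = {s ∈ S ∖ Σ : W_{Σ∪{s}} is finite}`. -/
def complSet (cs : CoxeterSystem M W) (Sg : Set W) : Set W :=
  {s ∈ simpleSet cs \ Sg | ((par (Sg ∪ {s}) : Set W)).Finite}

/-- `s̃ = w₀^{Σ∪{s}} w₀^Σ`. -/
noncomputable def tilde (cs : CoxeterSystem M W) (Sg : Set W) (s : W) : W :=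
  longest cs (Sg ∪ {s}) * longest cs Sg

/-- `S̃ = {s̃ : s ∈ Σ^∁}`. -/
noncomputable def relS (cs : CoxeterSystem M W) (Sg : Set W) : Set W :=
  {w | ∃ s ∈ complSet cs Sg, w = tilde cs Sg s}

/-- `ℓ̃(w) ∈ ℕ ∪ {∞}`: the minimal `q` such that `w = w₁ ⋯ w_q` with all `w_i ∈ S̃`. -/
noncomputable def relLength (cs : CoxeterSystem M W) (Sg : Set W) (w : W) : ℕ∞ :=
  sInf {q : ℕ∞ | ∃ l : List W, (∀ x ∈ l, x ∈ relS cs Sg) ∧ l.prod = w ∧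
    (l.length : ℕ∞) = q}

/-- The standing hypotheses on `Σ`: `Σ ⊆ S`, `W_Σ` is finite, and for every `Σ'` with
`Σ ⊆ Σ' ⊆ S` and `W_{Σ'}` finite, the longest element `w₀^{Σ'}` normalises `W_Σ`. -/
def GoodSubset (cs : CoxeterSystem M W) (Sg : Set W) : Prop :=
  Sg ⊆ simpleSet cs ∧ ((par Sg : Set W)).Finite ∧
  ∀ Sg' : Set W, Sg ⊆ Sg' → Sg' ⊆ simpleSet cs → ((par Sg' : Set W)).Finite →
    ∀ w0 : W, IsLongest cs Sg' w0 →
      (fun u => w0 * u * w0⁻¹) '' (par Sg : Set W) = (par Sg : Set W)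

/-!
The engine is the reflection cocycle. `W` acts on `W × ℤˣ` by `s · (t, ε) = (s t s, ±ε)`, the
sign flipping exactly when `t = s`; the resulting sign `η(w, t)` is `-1` precisely when `t` is a
right inversion of `w`, because the right inversion sequence of a reduced word has no repetitions.
The cocycle identity for `η` then says that `T(w w')` is the symmetric difference of `T(w)` and
`w T(w') w⁻¹`.

Consequently the left inversions of elements of `W_Σ` lie in `T_Σ`, so `T_Σ` is the set of
reflections of `W` lying in `W_Σ` and is stable under `N_W(W_Σ)`; this makes `W̃` closed under
products and inverses, and `W̃ ∩ W_Σ = {1}` since a non-trivial element of `W_Σ` has a left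
descent in `Σ`. Peeling off inversions in `T_Σ` writes every `x` as `u y` with `u ∈ W_Σ` and
`y ∈ ^ΣW`; if `x` normalises `W_Σ` then so does `y`, so `y ∈ W̃` and `x = y · (y⁻¹ u y)`.
-/

open CoxeterSystem
open scoped Classical

theorem conj_eq_iff_eq_conj_inv {G : Type*} [Group G] {g t u : G} :
    g * t * g⁻¹ = u ↔ t = g⁻¹ * u * g := by
  constructor <;> rintro rfl <;> group

theorem units_mul_eq_neg_one_iff (a b : ℤˣ) : a * b = -1 ↔ Xor (a = -1) (b = -1) := by
  rcases Int.units_eq_one_or a with rfl | rfl <;> rcases Int.units_eq_one_or b with rfl | rfl <;>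
    decide

section ReflectionRepresentation

variable (cs : CoxeterSystem M W)

theorem signFlip_involutive (i : B) :
    Function.Involutive fun p : W × ℤˣ =>
      (cs.simple i * p.1 * cs.simple i, p.2 * if p.1 = cs.simple i then -1 else 1) := by
  rintro ⟨t, ε⟩
  by_cases ht : t = cs.simple i <;> simp [ht, mul_assoc, mul_eq_one_iff_eq_inv]

noncomputable def signFlip (i : B) : Equiv.Perm (W × ℤˣ) :=
  Function.Involutive.toPerm _ (signFlip_involutive cs i)

theorem signFlip_apply (i : B) (t : W) (ε : ℤˣ) :
    signFlip cs i (t, ε) =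
      (cs.simple i * t * cs.simple i, ε * if t = cs.simple i then -1 else 1) :=
  rfl

theorem signFlip_mul_signFlip_pow_apply (i i' : B) (k : ℕ) (t : W) (ε : ℤˣ) :
    ((signFlip cs i * signFlip cs i') ^ k) (t, ε) =
      ((cs.simple i * cs.simple i') ^ k * t * ((cs.simple i * cs.simple i') ^ k)⁻¹,
        ε * ∏ j ∈ Finset.range (2 * k),
          if t = (cs.simple i' * cs.simple i) ^ j * cs.simple i' then -1 else 1) := by
  induction k with
  | zero => simp
  | succ k ih =>
    set s := cs.simple i
    set s' := cs.simple i'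
    have hinv : ((s * s') ^ k)⁻¹ = (s' * s) ^ k := by
      rw [← inv_pow, mul_inv_rev, cs.inv_simple, cs.inv_simple]
    have hswap : s' * (s * s') ^ k = (s' * s) ^ k * s' := (mul_pow_mul _ _ _).symm
    have hfirst : (s * s') ^ k * t * ((s * s') ^ k)⁻¹ = s' ↔ t = (s' * s) ^ (2 * k) * s' := by
      rw [conj_eq_iff_eq_conj_inv, hinv, mul_assoc, hswap, ← mul_assoc, ← pow_add, two_mul]
    have hsecond : s' * ((s * s') ^ k * t * ((s * s') ^ k)⁻¹) * s' = s ↔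
        t = (s' * s) ^ (2 * k + 1) * s' := by
      have hs' : s'⁻¹ = s' := cs.inv_simple i'
      have hconj := conj_eq_iff_eq_conj_inv (g := s') (t := (s * s') ^ k * t * ((s * s') ^ k)⁻¹)
        (u := s)
      rw [hs'] at hconj
      rw [hconj, conj_eq_iff_eq_conj_inv, hinv]
      suffices (s' * s) ^ k * (s' * s * s') * (s * s') ^ k = (s' * s) ^ (2 * k + 1) * s' by
        rw [this]
      calc (s' * s) ^ k * (s' * s * s') * (s * s') ^ k
          = (s' * s) ^ k * (s' * s) * (s' * (s * s') ^ k) := by simp only [mul_assoc]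
        _ = (s' * s) ^ (k + 1 + k) * s' := by rw [hswap]; simp only [pow_add, pow_one, mul_assoc]
        _ = (s' * s) ^ (2 * k + 1) * s' := by ring_nf
    rw [pow_succ', Equiv.Perm.mul_apply, ih, Equiv.Perm.mul_apply, signFlip_apply, signFlip_apply,
      hfirst, hsecond]
    refine Prod.ext ?_ ?_
    · simp [pow_succ', mul_assoc, mul_inv_rev, s, s']
    · simp only [Nat.mul_succ, Finset.prod_range_succ, mul_assoc]

theorem isLiftable_signFlip : M.IsLiftable (signFlip cs) := by
  intro i i'
  -- `(s' s) ^ j` has period `M i i'` in `j`, so each sign factor occurs an even number of times.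
  ext ⟨t, ε⟩ : 1
  rw [signFlip_mul_signFlip_pow_apply, cs.simple_mul_simple_pow, two_mul, Finset.prod_range_add]
  simp_rw [pow_add, cs.simple_mul_simple_pow', one_mul, Int.units_mul_self]
  simp

/-- The reflection representation of Björner–Brenti, *Combinatorics of Coxeter Groups*, §1.4. -/
noncomputable def reflectionRep : W →* Equiv.Perm (W × ℤˣ) :=
  cs.lift ⟨signFlip cs, isLiftable_signFlip cs⟩

theorem reflectionRep_wordProd (ω : List B) :
    reflectionRep cs (cs.wordProd ω) = (ω.map (signFlip cs)).prod := by
  simp [CoxeterSystem.wordProd, map_list_prod, reflectionRep, Function.comp_def]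

theorem prod_map_signFlip_apply (ω : List B) (t : W) (ε : ℤˣ) :
    (ω.map (signFlip cs)).prod (t, ε) =
      (cs.wordProd ω * t * (cs.wordProd ω)⁻¹,
        ε * ((cs.rightInvSeq ω).map fun r => if t = r then -1 else 1).prod) := by
  induction ω generalizing ε with
  | nil => simp
  | cons i ω ih =>
    rw [List.map_cons, List.prod_cons, Equiv.Perm.mul_apply, ih, signFlip_apply,
      conj_eq_iff_eq_conj_inv]
    simp [CoxeterSystem.rightInvSeq, cs.wordProd_cons, mul_assoc, mul_comm]

noncomputable def reflectionSign (w t : W) : ℤˣ := (reflectionRep cs w (t, 1)).2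

theorem reflectionSign_wordProd (ω : List B) (t : W) :
    reflectionSign cs (cs.wordProd ω) t =
      ((cs.rightInvSeq ω).map fun r => if t = r then -1 else 1).prod := by
  simp [reflectionSign, reflectionRep_wordProd, prod_map_signFlip_apply]

theorem reflectionRep_apply (w t : W) (ε : ℤˣ) :
    reflectionRep cs w (t, ε) = (w * t * w⁻¹, ε * reflectionSign cs w t) := by
  obtain ⟨ω, rfl⟩ := cs.wordProd_surjective w
  rw [reflectionSign_wordProd, reflectionRep_wordProd, prod_map_signFlip_apply]

theorem reflectionSign_mul (w u t : W) :
    reflectionSign cs (w * u) t = reflectionSign cs u t * reflectionSign cs w (u * t * u⁻¹) := by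
  have h : reflectionRep cs (w * u) (t, 1) = reflectionRep cs w (reflectionRep cs u (t, 1)) := by
    rw [map_mul, Equiv.Perm.mul_apply]
  rw [reflectionRep_apply, reflectionRep_apply, reflectionRep_apply] at h
  simpa using congrArg Prod.snd h

theorem reflectionSign_one (t : W) : reflectionSign cs 1 t = 1 := by
  simp [reflectionSign]

theorem reflectionSign_simple (i : B) (t : W) :
    reflectionSign cs (cs.simple i) t = if t = cs.simple i then -1 else 1 := by
  simpa using reflectionSign_wordProd cs [i] t

theorem reflectionSign_wordProd_eq_neg_one_iff {ω : List B} (hω : cs.IsReduced ω) (t : W) :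
    reflectionSign cs (cs.wordProd ω) t = -1 ↔ t ∈ cs.rightInvSeq ω := by
  rw [reflectionSign_wordProd, ← List.prod_toFinset _ hω.nodup_rightInvSeq, Finset.prod_ite_eq]
  split_ifs with h <;> simpa using h

theorem reflectionSign_self {t : W} (ht : cs.IsReflection t) : reflectionSign cs t t = -1 := by
  obtain ⟨v, i, rfl⟩ := ht
  have hconj : v⁻¹ * (v * cs.simple i * v⁻¹) * v⁻¹⁻¹ = cs.simple i := by group
  have hinv := reflectionSign_mul cs v v⁻¹ (v * cs.simple i * v⁻¹)
  rw [mul_inv_cancel, reflectionSign_one, hconj] at hinv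
  rw [reflectionSign_mul cs (v * cs.simple i) v⁻¹, hconj, reflectionSign_mul cs v (cs.simple i),
    reflectionSign_simple, if_pos rfl, mul_inv_cancel_right, mul_left_comm, ← hinv, mul_one]

theorem isRightInversion_of_reflectionSign_eq_neg_one {w t : W}
    (h : reflectionSign cs w t = -1) : cs.IsRightInversion w t := by
  obtain ⟨ω, hω, rfl⟩ := cs.exists_isReduced w
  exact cs.isRightInversion_of_mem_rightInvSeq hω
    ((reflectionSign_wordProd_eq_neg_one_iff cs hω t).mp h)

theorem reflectionSign_eq_neg_one_iff {t : W} (ht : cs.IsReflection t) (w : W) :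
    reflectionSign cs w t = -1 ↔ cs.IsRightInversion w t := by
  refine ⟨isRightInversion_of_reflectionSign_eq_neg_one cs, fun hw => ?_⟩
  by_contra hne
  have hone : reflectionSign cs w t = 1 := (Int.units_eq_one_or _).resolve_right hne
  have hwt : reflectionSign cs (w * t) t = -1 := by
    rw [reflectionSign_mul, reflectionSign_self cs ht, ht.inv, ht.mul_self, one_mul, hone, mul_one]
  exact ht.isRightInversion_mul_left_iff.mp
    (isRightInversion_of_reflectionSign_eq_neg_one cs hwt) hw

theorem isLeftInversion_iff_reflectionSign {t : W} (ht : cs.IsReflection t) (w : W) :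
    cs.IsLeftInversion w t ↔ reflectionSign cs w⁻¹ t = -1 := by
  rw [reflectionSign_eq_neg_one_iff cs ht, cs.isRightInversion_inv_iff]

theorem isLeftInversion_mul_iff {t : W} (ht : cs.IsReflection t) (w w' : W) :
    cs.IsLeftInversion (w * w') t ↔
      Xor (cs.IsLeftInversion w t) (cs.IsLeftInversion w' (w⁻¹ * t * w)) := by
  have ht' : cs.IsReflection (w⁻¹ * t * w) := by simpa using ht.conj w⁻¹
  rw [isLeftInversion_iff_reflectionSign cs ht, isLeftInversion_iff_reflectionSign cs ht,
    isLeftInversion_iff_reflectionSign cs ht', mul_inv_rev, reflectionSign_mul, inv_inv]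
  exact units_mul_eq_neg_one_iff _ _

theorem isLeftInversion_inv_iff_conj {w t : W} :
    cs.IsLeftInversion w⁻¹ t ↔ cs.IsLeftInversion w (w * t * w⁻¹) := by
  rw [cs.isLeftInversion_inv_iff, CoxeterSystem.IsRightInversion, CoxeterSystem.IsLeftInversion,
    isReflection_conj_iff, inv_mul_cancel_right]

end ReflectionRepresentation

theorem mem_invSet_iff {cs : CoxeterSystem M W} {w t : W} :
    t ∈ invSet cs w ↔ cs.IsLeftInversion w t :=
  Iff.rfl

theorem mem_minLeft_iff {cs : CoxeterSystem M W} {Sg : Set W} {w : W} :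
    w ∈ minLeft cs Sg ↔ ∀ t ∈ parRefl Sg, ¬cs.IsLeftInversion w t := by
  simp [minLeft, Set.eq_empty_iff_forall_notMem, mem_invSet_iff, imp_not_comm]

theorem mem_relW_iff {cs : CoxeterSystem M W} {Sg : Set W} {w : W} :
    w ∈ relW cs Sg ↔ w ∈ Subgroup.normalizer (par Sg : Set W) ∧ w ∈ minLeft cs Sg := by
  rw [Subgroup.mem_normalizer_iff_conj_image_eq]
  rfl

theorem eq_of_isLeftInversion_simple {cs : CoxeterSystem M W} {i : B} {t : W}
    (h : cs.IsLeftInversion (cs.simple i) t) : t = cs.simple i := by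
  have hlen : cs.length (t * cs.simple i) = 0 := by
    have := h.2
    rw [cs.length_simple] at this
    omega
  rw [cs.length_eq_zero_iff, mul_eq_one_iff_eq_inv, cs.inv_simple] at hlen
  exact hlen

section Parabolic

variable {cs : CoxeterSystem M W} {Sg : Set W}

theorem parRefl_subset_par : parRefl Sg ⊆ (par Sg : Set W) := by
  rintro t ⟨u, hu, s, hs, rfl⟩
  exact mul_mem (mul_mem hu (Subgroup.subset_closure hs)) (inv_mem hu)

theorem subset_parRefl : Sg ⊆ parRefl Sg :=
  fun s hs => ⟨1, one_mem _, s, hs, by simp⟩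

theorem conj_mem_parRefl {u t : W} (hu : u ∈ par Sg) (ht : t ∈ parRefl Sg) :
    u * t * u⁻¹ ∈ parRefl Sg := by
  obtain ⟨v, hv, s, hs, rfl⟩ := ht
  exact ⟨u * v, mul_mem hu hv, s, hs, by group⟩

theorem one_mem_minLeft : (1 : W) ∈ minLeft cs Sg := by
  simp [mem_minLeft_iff, CoxeterSystem.IsLeftInversion]

theorem exists_par_mul_minLeft (x : W) : ∃ u ∈ par Sg, ∃ y ∈ minLeft cs Sg, u * y = x := by
  induction hx : cs.length x using Nat.strong_induction_on generalizing x with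
  | _ n ih =>
    by_cases hmin : x ∈ minLeft cs Sg
    · exact ⟨1, one_mem _, x, hmin, one_mul x⟩
    obtain ⟨t, htS, htx⟩ : ∃ t ∈ parRefl Sg, cs.IsLeftInversion x t := by
      simpa [mem_minLeft_iff] using hmin
    obtain ⟨u, hu, y, hy, huy⟩ := ih _ (hx ▸ htx.2) (t * x) rfl
    refine ⟨t * u, mul_mem (parRefl_subset_par htS) hu, y, hy, ?_⟩
    rw [mul_assoc, huy, ← mul_assoc, htx.1.mul_self, one_mul]

theorem relW_subset_minLeft : relW cs Sg ⊆ minLeft cs Sg :=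
  fun _ hw => (mem_relW_iff.mp hw).2

theorem exists_relW_mul_par {x : W} (hx : x ∈ Subgroup.normalizer (par Sg : Set W)) :
    ∃ y ∈ relW cs Sg, ∃ u ∈ par Sg, y * u = x := by
  obtain ⟨u, hu, y, hy, rfl⟩ := exists_par_mul_minLeft (cs := cs) (Sg := Sg) x
  have huN : u ∈ Subgroup.normalizer (par Sg : Set W) := Subgroup.le_normalizer hu
  have hyN : y ∈ Subgroup.normalizer (par Sg : Set W) := by
    simpa using mul_mem (inv_mem huN) hx
  refine ⟨y, mem_relW_iff.mpr ⟨hyN, hy⟩, y⁻¹ * u * y, ?_, by group⟩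
  simpa using (Subgroup.mem_normalizer_iff.mp (inv_mem hyN) u).mp hu

variable (hS : Sg ⊆ simpleSet cs)
include hS

theorem mem_parRefl_of_isLeftInversion {v t : W} (hv : v ∈ par Sg)
    (ht : cs.IsLeftInversion v t) : t ∈ parRefl Sg := by
  have step {s v : W} (hs : s ∈ Sg) (ih : ∀ {t}, cs.IsLeftInversion v t → t ∈ parRefl Sg) {t : W}
      (ht : cs.IsLeftInversion (s * v) t) : t ∈ parRefl Sg := by
    obtain ⟨i, rfl⟩ := hS hs
    rcases ((isLeftInversion_mul_iff cs ht.1 _ v).mp ht).or with h | h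
    · exact eq_of_isLeftInversion_simple h ▸ subset_parRefl hs
    · simpa [← mul_assoc, cs.simple_mul_simple_self, cs.simple_mul_simple_cancel_right] using
        conj_mem_parRefl (Subgroup.subset_closure hs) (ih h)
  induction hv using Subgroup.closure_induction_left generalizing t with
  | one => exact absurd ht.2 (by simp)
  | mul_left s hs v _ ih => exact step hs ih ht
  | inv_mul_cancel s hs v _ ih =>
    obtain ⟨i, rfl⟩ := hS hs
    rw [cs.inv_simple] at ht
    exact step hs ih ht

theorem mem_parRefl_iff {t : W} : t ∈ parRefl Sg ↔ t ∈ par Sg ∧ cs.IsReflection t := by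
  refine ⟨fun ht => ⟨parRefl_subset_par ht, ?_⟩, fun ⟨hpar, hrefl⟩ => ?_⟩
  · obtain ⟨u, -, s, hs, rfl⟩ := ht
    obtain ⟨i, rfl⟩ := hS hs
    exact (cs.isReflection_simple i).conj u
  · refine mem_parRefl_of_isLeftInversion hS hpar ⟨hrefl, ?_⟩
    rw [hrefl.mul_self, cs.length_one]
    exact hrefl.odd_length.pos

theorem conj_mem_parRefl_of_mem_normalizer {w t : W}
    (hw : w ∈ Subgroup.normalizer (par Sg : Set W)) (ht : t ∈ parRefl Sg) :
    w * t * w⁻¹ ∈ parRefl Sg := by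
  rw [mem_parRefl_iff hS] at ht ⊢
  exact ⟨(Subgroup.mem_normalizer_iff.mp hw t).mp ht.1, ht.2.conj w⟩

theorem minLeft_inter_par : minLeft cs Sg ∩ (par Sg : Set W) = {1} := by
  refine Set.eq_singleton_iff_unique_mem.mpr
    ⟨⟨one_mem_minLeft, one_mem _⟩, fun v ⟨hv, hvpar⟩ => ?_⟩
  by_contra hne
  obtain ⟨i, hi⟩ := cs.exists_leftDescent_of_ne_one hne
  have hinv : cs.IsLeftInversion v (cs.simple i) := ⟨cs.isReflection_simple i, hi⟩
  exact mem_minLeft_iff.mp hv _ (mem_parRefl_of_isLeftInversion hS hvpar hinv) hinv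

theorem inv_mem_relW {w : W} (hw : w ∈ relW cs Sg) : w⁻¹ ∈ relW cs Sg := by
  rw [mem_relW_iff, mem_minLeft_iff] at hw ⊢
  refine ⟨inv_mem hw.1, fun t ht hinv => ?_⟩
  exact hw.2 _ (conj_mem_parRefl_of_mem_normalizer hS hw.1 ht)
    ((isLeftInversion_inv_iff_conj cs).mp hinv)

theorem mul_mem_relW {w w' : W} (hw : w ∈ relW cs Sg) (hw' : w' ∈ relW cs Sg) :
    w * w' ∈ relW cs Sg := by
  rw [mem_relW_iff, mem_minLeft_iff] at hw hw' ⊢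
  refine ⟨mul_mem hw.1 hw'.1, fun t ht hinv => ?_⟩
  have ht' : w⁻¹ * t * w ∈ parRefl Sg := by
    simpa using conj_mem_parRefl_of_mem_normalizer hS (inv_mem hw.1) ht
  have htrefl := ((mem_parRefl_iff hS).mp ht).2
  rcases ((isLeftInversion_mul_iff cs htrefl w w').mp hinv).or with h | h
  · exact hw.2 t ht h
  · exact hw'.2 _ ht' h

def relWSubgroup : Subgroup W where
  carrier := relW cs Sg
  one_mem' := mem_relW_iff.mpr ⟨one_mem _, one_mem_minLeft⟩
  mul_mem' := mul_mem_relW hS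
  inv_mem' := inv_mem_relW hS

theorem relW_inter_par : relW cs Sg ∩ (par Sg : Set W) = {1} := by
  refine Set.Subset.antisymm (fun v hv => ?_) (Set.singleton_subset_iff.mpr ?_)
  · exact (minLeft_inter_par hS).subset ⟨relW_subset_minLeft hv.1, hv.2⟩
  · exact ⟨(relWSubgroup hS).one_mem, one_mem _⟩

end Parabolic

theorem bijOn_mul_of_inter_eq_one {G : Type*} [Group G] {H K N : Subgroup G} (hH : H ≤ N)
    (hK : K ≤ N) (hHK : (H : Set G) ∩ K = {1}) (hN : ∀ n ∈ N, ∃ h ∈ H, ∃ k ∈ K, h * k = n) :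
    Set.BijOn (fun p : G × G => p.1 * p.2) ((H : Set G) ×ˢ (K : Set G)) N := by
  refine ⟨fun p hp => mul_mem (hH hp.1) (hK hp.2), ?_, fun n hn => ?_⟩
  · rintro ⟨h, k⟩ ⟨hh, hk⟩ ⟨h', k'⟩ ⟨hh', hk'⟩ heq
    have hmem : h'⁻¹ * h ∈ (H : Set G) ∩ K := by
      refine ⟨mul_mem (inv_mem hh') hh, ?_⟩
      have : h'⁻¹ * h = k' * k⁻¹ := by
        rw [inv_mul_eq_iff_eq_mul, ← mul_assoc, eq_mul_inv_iff_mul_eq]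
        exact heq
      rw [SetLike.mem_coe, this]
      exact mul_mem hk' (inv_mem hk)
    rw [hHK, Set.mem_singleton_iff, inv_mul_eq_one] at hmem
    subst hmem
    exact Prod.ext rfl (mul_left_cancel heq)
  · obtain ⟨h, hh, k, hk, rfl⟩ := hN n hn
    exact ⟨(h, k), ⟨hh, hk⟩, rfl⟩

variable (cs : CoxeterSystem M W)

/-- `W̃` is a subgroup of `N_W(W_Σ)`, `W̃ ∩ W_Σ = {1}`, and multiplication
`W̃ × W_Σ → N_W(W_Σ)` is a bijection, so `N_W(W_Σ) = W̃ ⋉ W_Σ`. -/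
theorem relW_semidirect (Sg : Set W) (hSg : GoodSubset cs Sg) :
    ∃ H : Subgroup W, (H : Set W) = relW cs Sg ∧ H ≤ Subgroup.normalizer (par Sg : Set W) ∧
      relW cs Sg ∩ (par Sg : Set W) = {1} ∧
      Set.BijOn (fun p : W × W => p.1 * p.2) (relW cs Sg ×ˢ (par Sg : Set W))
        (Subgroup.normalizer (par Sg : Set W) : Set W) := by
  have hS : Sg ⊆ simpleSet cs := hSg.1
  have hle : relWSubgroup hS ≤ Subgroup.normalizer (par Sg : Set W) :=
    fun w hw => (mem_relW_iff.mp hw).1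
  have hinter := relW_inter_par hS
  exact ⟨relWSubgroup hS, rfl, hle, hinter,
    bijOn_mul_of_inter_eq_one hle Subgroup.le_normalizer hinter fun _ => exists_relW_mul_par⟩

end RelativeCoxeter
end

section
/- Let Σ, Σ' ⊆ S and let y ∈ N(Σ, Σ'). Then the conjugation map Int_y : W_Σ → W_{Σ'}, w ↦ y w y⁻¹, preserves the length function ℓ of (W, S); consequently it is an isomorphism of Coxeter systems (W_Σ, Σ) ≅ (W_{Σ'}, Σ'), so that y Σ y⁻¹ = Σ', and it restricts to a bijection T_Σ ≅ T_{Σ'} between the sets of reflections. -/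
/-!
Relative Coxeter groups: common definitions.

`(W, S)` is a Coxeter system (Mathlib's `CoxeterSystem M W`), `ℓ = cs.length`.
For `w : W`, `invSet cs w` is the set `T(w)` of left inversions of `w`, and
`descSet cs w = T(w) ∩ S` is `D(w)`.  For a subset `Sg ⊆ S` (playing the role of `Σ`),
`par Sg` is the standard parabolic subgroup `W_Σ`, `parRefl Sg` its set of
reflections `T_Σ`, `minRight cs Sg = W^Σ`, `minLeft cs Sg = ^ΣW`,
`relN cs Sg Sg' = N(Σ, Σ')`, `IsLongest cs Sg w` says `w` is a longest element of `W_Σ`,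
`longest cs Sg` is the longest element `w₀^Σ`, `relW cs Sg = W̃`,
`complSet cs Sg = Σ^∁`, `tilde cs Sg s = s̃ = w₀^{Σ∪{s}} w₀^Σ`, `relS cs Sg = S̃`,
`relLength cs Sg = ℓ̃ : W → ℕ∞`, and `GoodSubset cs Sg` records the standing
hypotheses (1) and (2) on `Σ`.
-/

namespace RelativeCoxeter

variable {B W : Type*} [Group W] {M : CoxeterMatrix B}

variable (cs : CoxeterSystem M W)

/-!
Tits' construction: the simple reflections act on `W × ZMod 2` by
`s_i • (t, e) = (s_i t s_i, e + [t = s_i])`, and this respects the Coxeter relations. The sign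
`ν(w, t)` picked up by `(t, 0)` under `w` counts mod 2 the occurrences of `t` in the right
inversion sequence of any word for `w`; hence it is `1` exactly when `t` is a right inversion of
`w` (this also yields the strong exchange condition), and it is a cocycle:
`ν(xy, t) = ν(y, t) + ν(x, y t y⁻¹)`.

For `y ∈ W^Σ`, `w ∈ W_Σ` and `s ∈ Σ` the reflection `w s w⁻¹ ∈ T_Σ` is not a right inversion
of `y`, so by the cocycle identity `s` is a right descent of `yw` iff it is one of `w`; along
words in `Σ` this gives `ℓ(yw) = ℓ(y) + ℓ(w)`. Dually `ℓ(w'y) = ℓ(w') + ℓ(y)` for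
`w' ∈ W_{Σ'}`, and `w' = ywy⁻¹` gives `ℓ(ywy⁻¹) = ℓ(w)`. By strong exchange the elements of
`W_Σ` have reduced words in the letters of `Σ`, so `Σ` is the set of elements of length one
of `W_Σ`. Hence conjugation by `y` maps `Σ` into `Σ'` and `T_Σ` into `T_{Σ'}`, and so does
conjugation by `y⁻¹ ∈ N(Σ', Σ)`.
-/

open CoxeterSystem

theorem conj_eq_iff_eq_conj {G : Type*} [Group G] (g x z : G) :
    g * x * g⁻¹ = z ↔ x = g⁻¹ * z * g := by
  constructor <;> rintro rfl <;> group

theorem sum_range_two_mul_eq_zero_of_periodic {R : Type*} [Ring R] [CharP R 2] {f : ℕ → R} {m : ℕ}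
    (hf : Function.Periodic f m) : ∑ l ∈ Finset.range (2 * m), f l = 0 := by
  rw [two_mul, Finset.sum_range_add]
  simp only [add_comm m, hf _, CharTwo.add_self_eq_zero]

theorem zmod_two_eq_zero_iff_ne_one (a : ZMod 2) : a = 0 ↔ a ≠ 1 := by
  decide +revert

section

open scoped Classical

local prefix:100 "s" => cs.simple
local prefix:100 "π" => cs.wordProd
local prefix:100 "ℓ" => cs.length

noncomputable def titsMap (i : B) (x : W × ZMod 2) : W × ZMod 2 :=
  (s i * x.1 * s i, x.2 + if x.1 = s i then 1 else 0)

theorem simple_conj_eq_iff (i : B) (t u : W) : s i * t * s i = u ↔ t = s i * u * s i := by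
  simpa [cs.inv_simple] using conj_eq_iff_eq_conj (s i) t u

theorem titsMap_involutive (i : B) : Function.Involutive (titsMap cs i) := by
  rintro ⟨t, e⟩
  refine Prod.ext ?_ ?_
  · simp [titsMap, mul_assoc, cs.simple_mul_simple_self]
  · simp only [titsMap, simple_conj_eq_iff, cs.simple_mul_simple_self, one_mul, add_assoc,
      CharTwo.add_self_eq_zero, add_zero]

noncomputable def titsPerm (i : B) : Equiv.Perm (W × ZMod 2) :=
  (titsMap_involutive cs i).toPerm

theorem titsPerm_apply (i : B) (x : W × ZMod 2) : titsPerm cs i x = titsMap cs i x := rfl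

theorem titsPerm_mul_pow_apply (i j : B) (n : ℕ) (t : W) (e : ZMod 2) :
    ((titsPerm cs i * titsPerm cs j) ^ n) (t, e) =
      ((s i * s j) ^ n * t * ((s i * s j) ^ n)⁻¹,
        e + ∑ l ∈ Finset.range (2 * n), if t = (s j * s i) ^ l * s j then 1 else 0) := by
  induction n generalizing t e with
  | zero => simp
  | succ n ih =>
    have hinv : (s i * s j)⁻¹ = s j * s i := by simp [cs.inv_simple]
    have hshift : ∀ l, s i * (s j * t * s j) * s i = (s j * s i) ^ l * s j ↔
        t = (s j * s i) ^ (l + 1 + 1) * s j := fun l => by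
      rw [simple_conj_eq_iff, simple_conj_eq_iff, show l + 1 + 1 = 1 + l + 1 by ring, pow_succ,
        pow_add, pow_one]
      simp only [mul_assoc]
    rw [pow_succ, Equiv.Perm.mul_apply, Equiv.Perm.mul_apply, titsPerm_apply, titsPerm_apply]
    simp only [titsMap]
    rw [ih, show 2 * (n + 1) = 2 * n + 1 + 1 by ring, Finset.sum_range_succ',
      Finset.sum_range_succ']
    simp only [hshift, simple_conj_eq_iff, zero_add, pow_one, pow_zero, one_mul]
    refine Prod.ext ?_ ?_
    · simp only [hinv, pow_succ, mul_inv_rev, mul_assoc]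
    · ring

theorem titsPerm_isLiftable : M.IsLiftable (titsPerm cs) := by
  intro i j
  -- `(s j * s i) ^ M i j = 1`, so each reflection is counted twice in the sign
  ext ⟨t, e⟩ : 1
  rw [titsPerm_mul_pow_apply, cs.simple_mul_simple_pow, one_mul, inv_one, mul_one,
    sum_range_two_mul_eq_zero_of_periodic, add_zero]
  · rfl
  intro l
  simp only [pow_add, cs.simple_mul_simple_pow', mul_one]

noncomputable def titsRep : W →* Equiv.Perm (W × ZMod 2) :=
  cs.lift ⟨titsPerm cs, titsPerm_isLiftable cs⟩

noncomputable def invParity (w t : W) : ZMod 2 := (titsRep cs w (t, 0)).2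

theorem titsRep_simple (i : B) : titsRep cs (s i) = titsPerm cs i :=
  cs.lift_apply_simple (titsPerm_isLiftable cs) i

theorem titsRep_apply (w t : W) (e : ZMod 2) :
    titsRep cs w (t, e) = (w * t * w⁻¹, e + invParity cs w t) := by
  induction w using cs.simple_induction_left generalizing t e with
  | one => simp [invParity]
  | mul_simple_left w i ih =>
    have hstep : ∀ e, titsRep cs (s i * w) (t, e) = (s i * (w * t * w⁻¹) * s i,
        e + invParity cs w t + if w * t * w⁻¹ = s i then 1 else 0) := fun e => by
      rw [map_mul, Equiv.Perm.mul_apply, ih, titsRep_simple, titsPerm_apply]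
      rfl
    rw [invParity, hstep, hstep, zero_add, add_assoc]
    simp only [mul_inv_rev, cs.inv_simple, mul_assoc]

theorem invParity_mul (x y t : W) :
    invParity cs (x * y) t = invParity cs y t + invParity cs x (y * t * y⁻¹) := by
  rw [invParity, map_mul, Equiv.Perm.mul_apply, titsRep_apply, titsRep_apply, zero_add]

theorem invParity_one (t : W) : invParity cs 1 t = 0 := by
  simp [invParity]

theorem invParity_simple (i : B) (t : W) : invParity cs (s i) t = if t = s i then 1 else 0 := by
  rw [invParity, titsRep_simple, titsPerm_apply, titsMap, zero_add]

theorem invParity_inv_conj (w t : W) : invParity cs w⁻¹ (w * t * w⁻¹) = invParity cs w t := by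
  have h := invParity_mul cs w⁻¹ w t
  rw [inv_mul_cancel, invParity_one] at h
  rw [← sub_eq_zero, CharTwo.sub_eq_add, add_comm, ← h]

theorem invParity_self {t : W} (ht : cs.IsReflection t) : invParity cs t t = 1 := by
  obtain ⟨u, i, rfl⟩ := ht
  have hconj : u⁻¹ * (u * s i * u⁻¹) * u⁻¹⁻¹ = s i := by group
  rw [invParity_mul, invParity_mul, invParity_simple, hconj, invParity_inv_conj,
    mul_inv_cancel_right, if_pos rfl, add_left_comm, CharTwo.add_self_eq_zero, add_zero]

theorem invParity_wordProd (ω : List B) (t : W) :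
    invParity cs (π ω) t = ((cs.rightInvSeq ω).count t : ZMod 2) := by
  induction ω with
  | nil => simp [invParity]
  | cons i ω ih =>
    rw [cs.wordProd_cons, invParity_mul, ih, invParity_simple, rightInvSeq, List.count_cons,
      conj_eq_iff_eq_conj, eq_comm]
    push_cast
    simp [@eq_comm _ t]

theorem mem_rightInvSeq_of_invParity_eq_one {ω : List B} {t : W}
    (h : invParity cs (π ω) t = 1) : t ∈ cs.rightInvSeq ω := by
  rw [invParity_wordProd] at h
  by_contra hmem
  simp [List.count_eq_zero_of_not_mem hmem] at h

theorem isRightInversion_of_invParity_eq_one {w t : W} (h : invParity cs w t = 1) :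
    cs.IsRightInversion w t := by
  obtain ⟨ω, hω, rfl⟩ := cs.exists_isReduced w
  exact cs.isRightInversion_of_mem_rightInvSeq hω (mem_rightInvSeq_of_invParity_eq_one cs h)

theorem invParity_mul_self {t : W} (ht : cs.IsReflection t) (w : W) :
    invParity cs (w * t) t = invParity cs w t + 1 := by
  rw [invParity_mul, mul_inv_cancel_right, invParity_self cs ht, add_comm]

theorem invParity_eq_one_iff {w t : W} (ht : cs.IsReflection t) :
    invParity cs w t = 1 ↔ cs.IsRightInversion w t := by
  refine ⟨isRightInversion_of_invParity_eq_one cs, fun hwt => ?_⟩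
  by_contra hne
  have h0 : invParity cs w t = 0 := (zmod_two_eq_zero_iff_ne_one _).2 hne
  have hwt' := isRightInversion_of_invParity_eq_one cs
    (by rw [invParity_mul_self cs ht, h0, zero_add] : invParity cs (w * t) t = 1)
  have hlt : ℓ (w * t) < ℓ w := hwt.2
  have hlt' : ℓ (w * t * t) < ℓ (w * t) := hwt'.2
  rw [mul_assoc, ht.mul_self, mul_one] at hlt'
  omega

theorem exists_eraseIdx_of_isRightInversion {ω : List B} {t : W}
    (h : cs.IsRightInversion (π ω) t) : ∃ j < ω.length, π ω * t = π (ω.eraseIdx j) := by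
  have hmem := mem_rightInvSeq_of_invParity_eq_one cs ((invParity_eq_one_iff cs h.1).2 h)
  obtain ⟨j, hj, rfl⟩ := List.getElem_of_mem hmem
  refine ⟨j, by simpa using hj, ?_⟩
  rw [← cs.wordProd_mul_getD_rightInvSeq, List.getD_eq_getElem]

theorem isRightInversion_mul_iff {y w t : W} (ht : cs.IsReflection t)
    (hy : ¬ cs.IsRightInversion y (w * t * w⁻¹)) :
    cs.IsRightInversion (y * w) t ↔ cs.IsRightInversion w t := by
  have hy0 : invParity cs y (w * t * w⁻¹) = 0 :=
    (zmod_two_eq_zero_iff_ne_one _).2 (mt (invParity_eq_one_iff cs (ht.conj w)).1 hy)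
  rw [← invParity_eq_one_iff cs ht, ← invParity_eq_one_iff cs ht, invParity_mul, hy0, add_zero]

theorem not_isRightInversion_of_mem_minRight {Sg : Set W} {y t : W} (hy : y ∈ minRight cs Sg)
    (ht : t ∈ parRefl Sg) : ¬ cs.IsRightInversion y t := fun hyt =>
  hy.subset ⟨cs.isRightInversion_inv_iff.1 (by rwa [inv_inv]), ht⟩

theorem isRightDescent_mul_iff_of_mem_minRight {Sg : Set W} {y w : W} {i : B}
    (hy : y ∈ minRight cs Sg) (hw : w ∈ par Sg) (hi : s i ∈ Sg) :
    cs.IsRightDescent (y * w) i ↔ cs.IsRightDescent w i := by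
  simp only [← isRightInversion_simple_iff_isRightDescent]
  exact isRightInversion_mul_iff cs (cs.isReflection_simple i)
    (not_isRightInversion_of_mem_minRight cs hy ⟨w, hw, s i, hi, rfl⟩)

theorem length_mul_of_mem_minRight {Sg : Set W} (hSg : Sg ⊆ simpleSet cs) {y w : W}
    (hy : y ∈ minRight cs Sg) (hw : w ∈ par Sg) : ℓ (y * w) = ℓ y + ℓ w := by
  have step : ∀ w ∈ par Sg, ∀ i, s i ∈ Sg → ℓ (y * w) = ℓ y + ℓ w →
      ℓ (y * (w * s i)) = ℓ y + ℓ (w * s i) := fun w hw i hi ih => by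
    rw [← mul_assoc]
    have hiff := isRightDescent_mul_iff_of_mem_minRight cs hy hw hi
    by_cases hd : cs.IsRightDescent w i
    · have hd' := hiff.2 hd
      rw [isRightDescent_iff] at hd hd'
      omega
    · have hd' := mt hiff.1 hd
      rw [not_isRightDescent_iff] at hd hd'
      omega
  refine Subgroup.closure_induction_right (p := fun w _ => ℓ (y * w) = ℓ y + ℓ w)
    (by simp) (fun w hw _ hs ih => ?_) (fun w hw _ hs ih => ?_) hw
  all_goals obtain ⟨i, rfl⟩ := hSg hs
  · exact step w hw i hs ih
  · rw [cs.inv_simple]; exact step w hw i hs ih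

theorem length_mul_of_mem_minLeft {Sg : Set W} (hSg : Sg ⊆ simpleSet cs) {y w : W}
    (hy : y ∈ minLeft cs Sg) (hw : w ∈ par Sg) : ℓ (w * y) = ℓ w + ℓ y := by
  have hy' : y⁻¹ ∈ minRight cs Sg := show invSet cs y⁻¹⁻¹ ∩ _ = ∅ by rwa [inv_inv]
  rw [← cs.length_inv, mul_inv_rev, length_mul_of_mem_minRight cs hSg hy' (inv_mem hw),
    cs.length_inv, cs.length_inv, add_comm]

theorem exists_isReduced_wordProd_mul_simple {ω : List B} (hω : cs.IsReduced ω) (i : B) :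
    ∃ ω' : List B, cs.IsReduced ω' ∧ π ω' = π ω * s i ∧ ω' ⊆ i :: ω := by
  by_cases hd : cs.IsRightDescent (π ω) i
  · obtain ⟨j, hj, hexch⟩ := exists_eraseIdx_of_isRightInversion cs
      ((cs.isRightInversion_simple_iff_isRightDescent _ i).2 hd)
    refine ⟨ω.eraseIdx j, ?_, hexch.symm,
      fun k hk => List.mem_cons_of_mem i (List.mem_of_mem_eraseIdx hk)⟩
    rw [isRightDescent_iff, hexch] at hd
    rw [CoxeterSystem.IsReduced, List.length_eraseIdx_of_lt hj, ← hω.eq]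
    omega
  · refine ⟨ω ++ [i], ?_, by rw [cs.wordProd_append, cs.wordProd_singleton], fun k hk => ?_⟩
    · rw [not_isRightDescent_iff] at hd
      rw [CoxeterSystem.IsReduced, cs.wordProd_append, cs.wordProd_singleton, hd, hω.eq,
        List.length_append, List.length_singleton]
    · rcases List.mem_append.1 hk with hk | hk
      exacts [List.mem_cons_of_mem i hk, List.eq_of_mem_singleton hk ▸ List.mem_cons_self]

theorem exists_isReduced_of_mem_par {Sg : Set W} (hSg : Sg ⊆ simpleSet cs) {w : W}
    (hw : w ∈ par Sg) : ∃ ω : List B, cs.IsReduced ω ∧ π ω = w ∧ ∀ i ∈ ω, s i ∈ Sg := by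
  have step : ∀ w i, s i ∈ Sg → (∃ ω : List B, cs.IsReduced ω ∧ π ω = w ∧ ∀ i ∈ ω, s i ∈ Sg) →
      ∃ ω : List B, cs.IsReduced ω ∧ π ω = w * s i ∧ ∀ i ∈ ω, s i ∈ Sg := by
    rintro _ i hi ⟨ω, hω, rfl, hωSg⟩
    obtain ⟨ω', hω', hprod, hsub⟩ := exists_isReduced_wordProd_mul_simple cs hω i
    refine ⟨ω', hω', hprod, fun k hk => ?_⟩
    rcases List.mem_cons.1 (hsub hk) with rfl | hk
    exacts [hi, hωSg k hk]
  refine Subgroup.closure_induction_right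
    (p := fun w _ => ∃ ω : List B, cs.IsReduced ω ∧ π ω = w ∧ ∀ i ∈ ω, s i ∈ Sg)
    ⟨[], by simp [CoxeterSystem.IsReduced], rfl, by simp⟩ (fun w _ _ hs ih => ?_)
    (fun w _ _ hs ih => ?_) hw
  all_goals obtain ⟨i, rfl⟩ := hSg hs
  · exact step w i hs ih
  · rw [cs.inv_simple]; exact step w i hs ih

theorem mem_of_mem_par_of_length_eq_one {Sg : Set W} (hSg : Sg ⊆ simpleSet cs) {w : W}
    (hw : w ∈ par Sg) (h : ℓ w = 1) : w ∈ Sg := by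
  obtain ⟨ω, hω, rfl, hωSg⟩ := exists_isReduced_of_mem_par cs hSg hw
  obtain ⟨i, rfl⟩ := List.length_eq_one_iff.1 (hω.symm.trans h)
  simpa using hωSg i (List.mem_singleton_self i)

end

theorem image_conj_eq {G : Type*} [Group G] {X Y : Set G} {g : G}
    (hXY : ∀ x ∈ X, g * x * g⁻¹ ∈ Y) (hYX : ∀ y ∈ Y, g⁻¹ * y * g⁻¹⁻¹ ∈ X) :
    (fun x => g * x * g⁻¹) '' X = Y :=
  (Set.image_subset_iff.2 hXY).antisymm fun y hy => ⟨_, hYX y hy, by group⟩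

section RelN

variable {Sg Sg' : Set W} {y : W}

theorem conj_mem_par_of_mem_relN (hy : y ∈ relN cs Sg Sg') {w : W} (hw : w ∈ par Sg) :
    y * w * y⁻¹ ∈ par Sg' := by
  rw [← SetLike.mem_coe, ← hy.2.2]
  exact Set.mem_image_of_mem _ hw

theorem inv_mem_relN (hy : y ∈ relN cs Sg Sg') : y⁻¹ ∈ relN cs Sg' Sg := by
  obtain ⟨hyR, hyL, hconj⟩ := hy
  refine ⟨show invSet cs y⁻¹⁻¹ ∩ _ = ∅ by rwa [inv_inv], hyR, image_conj_eq ?_ ?_⟩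
  · intro u hu
    obtain ⟨w, hw, rfl⟩ := hconj.symm ▸ hu
    simpa [mul_assoc] using hw
  · intro w hw
    simpa using conj_mem_par_of_mem_relN cs ⟨hyR, hyL, hconj⟩ hw

theorem length_conj_of_mem_relN (hSg : Sg ⊆ simpleSet cs) (hSg' : Sg' ⊆ simpleSet cs)
    (hy : y ∈ relN cs Sg Sg') {w : W} (hw : w ∈ par Sg) :
    cs.length (y * w * y⁻¹) = cs.length w := by
  have hyw := length_mul_of_mem_minRight cs hSg hy.1 hw
  have hywy := length_mul_of_mem_minLeft cs hSg' hy.2.1 (conj_mem_par_of_mem_relN cs hy hw)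
  rw [inv_mul_cancel_right, hyw] at hywy
  omega

theorem conj_mem_of_mem_relN (hSg : Sg ⊆ simpleSet cs) (hSg' : Sg' ⊆ simpleSet cs)
    (hy : y ∈ relN cs Sg Sg') {s : W} (hs : s ∈ Sg) : y * s * y⁻¹ ∈ Sg' := by
  have hspar : s ∈ par Sg := Subgroup.subset_closure hs
  refine mem_of_mem_par_of_length_eq_one cs hSg' (conj_mem_par_of_mem_relN cs hy hspar) ?_
  obtain ⟨i, rfl⟩ := hSg hs
  rw [length_conj_of_mem_relN cs hSg hSg' hy hspar, cs.length_simple]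

theorem conj_mem_parRefl_of_mem_relN (hSg : Sg ⊆ simpleSet cs) (hSg' : Sg' ⊆ simpleSet cs)
    (hy : y ∈ relN cs Sg Sg') {t : W} (ht : t ∈ parRefl Sg) : y * t * y⁻¹ ∈ parRefl Sg' := by
  obtain ⟨u, hu, s, hs, rfl⟩ := ht
  exact ⟨y * u * y⁻¹, conj_mem_par_of_mem_relN cs hy hu, y * s * y⁻¹,
    conj_mem_of_mem_relN cs hSg hSg' hy hs, by group⟩

end RelN

/-- for `y ∈ N(Σ, Σ')`, conjugation `Int_y : W_Σ → W_{Σ'}` preserves the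
length, hence sends `Σ` onto `Σ'` (an isomorphism of Coxeter systems) and `T_Σ` onto
`T_{Σ'}`. -/
theorem relN_conj_isom (Sg Sg' : Set W) (hSg : Sg ⊆ simpleSet cs)
    (hSg' : Sg' ⊆ simpleSet cs) (y : W) (hy : y ∈ relN cs Sg Sg') :
    (∀ w ∈ par Sg, cs.length (y * w * y⁻¹) = cs.length w) ∧
    (fun s => y * s * y⁻¹) '' Sg = Sg' ∧
    (fun t => y * t * y⁻¹) '' parRefl Sg = parRefl Sg' := by
  have hy' := inv_mem_relN cs hy
  exact ⟨fun w hw => length_conj_of_mem_relN cs hSg hSg' hy hw,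
    image_conj_eq (fun s hs => conj_mem_of_mem_relN cs hSg hSg' hy hs)
      (fun s hs => conj_mem_of_mem_relN cs hSg' hSg hy' hs),
    image_conj_eq (fun t ht => conj_mem_parRefl_of_mem_relN cs hSg hSg' hy ht)
      (fun t ht => conj_mem_parRefl_of_mem_relN cs hSg' hSg hy' ht)⟩

end RelativeCoxeter
end
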